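/- Suppose a signed graph Ω on underlying graph Γ is obtained from a graph H by a consecutive twisting with k parts, where G is 2-connected and M(G) = L(Ω). Then every cycle of H has connected edge set in Γ if and only if (k is odd, or) for some i ∈ [k] there is no path connecting x_i and y_i in H_i \ z_i when k is even. -/

import Mathlib

/-- A multigraph on vertex type `V` with edge type `E`: each edge has an
unordered pair of endpoints (possibly equal, giving a loop). -/
structure Multigraph (V E : Type) where
  ends : E → Sym2 V

namespace Multigraph

variable {V E : Type} [Fintype V] [DecidableEq V] [Fintype E] [DecidableEq E]

/-- The vertices incident with some edge of `C`. -/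
def vertsOf (G : Multigraph V E) (C : Finset E) : Finset V :=
  Finset.univ.filter fun v => ∃ e ∈ C, v ∈ G.ends e

/-- Degree of `v` in the subgraph with edge set `C`; loops count twice. -/
def deg (G : Multigraph V E) (C : Finset E) (v : V) : ℕ :=
  ∑ e ∈ C, (if G.ends e = Sym2.diag v then 2 else if v ∈ G.ends e then 1 else 0)

/-- Reachability using only edges in `C`. -/
def ReachE (G : Multigraph V E) (C : Finset E) (u w : V) : Prop :=
  Relation.ReflTransGen (fun a b => ∃ e ∈ C, a ∈ G.ends e ∧ b ∈ G.ends e) u w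

/-- The subgraph with edge set `C` is connected. -/
def ConnectedOn (G : Multigraph V E) (C : Finset E) : Prop :=
  ∀ u ∈ G.vertsOf C, ∀ w ∈ G.vertsOf C, G.ReachE C u w

/-- `C` is the edge set of a cycle of `G`. -/
def IsCycle (G : Multigraph V E) (C : Finset E) : Prop :=
  C.Nonempty ∧ G.ConnectedOn C ∧ ∀ v ∈ G.vertsOf C, G.deg C v = 2

/-- `P` is the edge set of a path of `G` from `u` to `w` (of positive length). -/
def IsPath (G : Multigraph V E) (P : Finset E) (u w : V) : Prop :=
  u ≠ w ∧ G.ConnectedOn P ∧ u ∈ G.vertsOf P ∧ w ∈ G.vertsOf P ∧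
    G.deg P u = 1 ∧ G.deg P w = 1 ∧
    ∀ v ∈ G.vertsOf P, v ≠ u → v ≠ w → G.deg P v = 2

/-- Theta data: three internally disjoint `u`–`w` paths. -/
def ThetaData (G : Multigraph V E) (P₁ P₂ P₃ : Finset E) (u w : V) : Prop :=
  G.IsPath P₁ u w ∧ G.IsPath P₂ u w ∧ G.IsPath P₃ u w ∧
    Disjoint P₁ P₂ ∧ Disjoint P₁ P₃ ∧ Disjoint P₂ P₃ ∧
    G.vertsOf P₁ ∩ G.vertsOf P₂ = {u, w} ∧
    G.vertsOf P₁ ∩ G.vertsOf P₃ = {u, w} ∧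
    G.vertsOf P₂ ∩ G.vertsOf P₃ = {u, w}

/-- `T` is the edge set of a theta subgraph of `G`. -/
def IsTheta (G : Multigraph V E) (T : Finset E) : Prop :=
  ∃ u w P₁ P₂ P₃, G.ThetaData P₁ P₂ P₃ u w ∧ T = P₁ ∪ P₂ ∪ P₃

/-- The theta property: no theta subgraph contains exactly two balanced cycles. -/
def ThetaProperty (G : Multigraph V E) (B : Set (Finset E)) : Prop :=
  ∀ u w P₁ P₂ P₃, G.ThetaData P₁ P₂ P₃ u w →
    ¬ ((P₁ ∪ P₂ ∈ B ∧ P₁ ∪ P₃ ∈ B ∧ P₂ ∪ P₃ ∉ B) ∨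
       (P₁ ∪ P₂ ∈ B ∧ P₁ ∪ P₃ ∉ B ∧ P₂ ∪ P₃ ∈ B) ∨
       (P₁ ∪ P₂ ∉ B ∧ P₁ ∪ P₃ ∈ B ∧ P₂ ∪ P₃ ∈ B))

/-- `(G, B)` is a biased graph. -/
def IsBiased (G : Multigraph V E) (B : Set (Finset E)) : Prop :=
  (∀ C ∈ B, G.IsCycle C) ∧ G.ThetaProperty B

/-- A tight handcuff: two edge-disjoint cycles meeting in exactly one vertex. -/
def TightHandcuff (G : Multigraph V E) (C₁ C₂ : Finset E) : Prop :=
  G.IsCycle C₁ ∧ G.IsCycle C₂ ∧ Disjoint C₁ C₂ ∧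
    (G.vertsOf C₁ ∩ G.vertsOf C₂).card = 1

/-- A loose handcuff: two vertex-disjoint cycles joined by a path meeting them
only in its endpoints. -/
def LooseHandcuff (G : Multigraph V E) (C₁ C₂ P : Finset E) : Prop :=
  G.IsCycle C₁ ∧ G.IsCycle C₂ ∧ Disjoint (G.vertsOf C₁) (G.vertsOf C₂) ∧
    Disjoint P C₁ ∧ Disjoint P C₂ ∧
    ∃ u₁ u₂, G.IsPath P u₁ u₂ ∧ u₁ ∈ G.vertsOf C₁ ∧ u₂ ∈ G.vertsOf C₂ ∧
      G.vertsOf P ∩ G.vertsOf C₁ = {u₁} ∧ G.vertsOf P ∩ G.vertsOf C₂ = {u₂}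

/-- Circuits of the frame matroid of the biased graph `(G, B)`. -/
def FrameCircuit (G : Multigraph V E) (B : Set (Finset E)) (C : Finset E) : Prop :=
  (G.IsCycle C ∧ C ∈ B) ∨
  (∃ C₁ C₂, G.TightHandcuff C₁ C₂ ∧ C₁ ∉ B ∧ C₂ ∉ B ∧ C = C₁ ∪ C₂) ∨
  (∃ C₁ C₂ P, G.LooseHandcuff C₁ C₂ P ∧ C₁ ∉ B ∧ C₂ ∉ B ∧ C = C₁ ∪ C₂ ∪ P) ∨
  (G.IsTheta C ∧ ∀ D ⊆ C, G.IsCycle D → D ∉ B)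

/-- The balanced cycles of a signed graph `(G, σ)`. -/
def balancedCycles (G : Multigraph V E) (σ : E → ℤˣ) : Set (Finset E) :=
  {C | G.IsCycle C ∧ ∏ e ∈ C, σ e = 1}

/-- Circuits of the frame matroid of a signed graph. -/
def SFrameCircuit (G : Multigraph V E) (σ : E → ℤˣ) (C : Finset E) : Prop :=
  G.FrameCircuit (G.balancedCycles σ) C

/-- Circuits of the lift matroid of a signed graph. -/
def LiftCircuit (G : Multigraph V E) (σ : E → ℤˣ) (C : Finset E) : Prop :=
  (G.IsCycle C ∧ ∏ e ∈ C, σ e = 1) ∨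
  (∃ C₁ C₂, G.IsCycle C₁ ∧ G.IsCycle C₂ ∧
    (∏ e ∈ C₁, σ e) = -1 ∧ (∏ e ∈ C₂, σ e) = -1 ∧ Disjoint C₁ C₂ ∧
    (G.vertsOf C₁ ∩ G.vertsOf C₂).card ≤ 1 ∧ C = C₁ ∪ C₂)

/-- The sign of edge `e` after switching at the vertex labelling `δ`. -/
def switchSign (G : Multigraph V E) (σ : E → ℤˣ) (δ : V → ℤˣ) (e : E) : ℤˣ :=
  Sym2.lift ⟨fun a b => δ a * δ b, fun a b => mul_comm _ _⟩ (G.ends e) * σ e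

/-- Reachability avoiding the vertex set `X`. -/
def ReachAvoiding (G : Multigraph V E) (X : Set V) (u w : V) : Prop :=
  Relation.ReflTransGen
    (fun a b => a ∉ X ∧ b ∉ X ∧ ∃ e, a ∈ G.ends e ∧ b ∈ G.ends e) u w

/-- `G` is 2-connected. -/
def TwoConnected (G : Multigraph V E) : Prop :=
  3 ≤ Fintype.card V ∧ (∀ u w, G.ReachAvoiding ∅ u w) ∧
    ∀ v u w, u ≠ v → w ≠ v → G.ReachAvoiding {v} u w

/-- `G` is 3-connected. -/
def ThreeConnected (G : Multigraph V E) : Prop :=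
  4 ≤ Fintype.card V ∧ (∀ u w, G.ReachAvoiding ∅ u w) ∧
    (∀ v u w, u ≠ v → w ≠ v → G.ReachAvoiding {v} u w) ∧
    ∀ v v' u w, u ∉ ({v, v'} : Set V) → w ∉ ({v, v'} : Set V) →
      G.ReachAvoiding {v, v'} u w

/-- `v` is a cut-vertex of `G`. -/
def CutVertex (G : Multigraph V E) (v : V) : Prop :=
  ∃ u w, u ≠ v ∧ w ≠ v ∧ G.ReachAvoiding ∅ u w ∧ ¬ G.ReachAvoiding {v} u w

/-- `B` is (the edge set of) a block of `G`: an equivalence class of the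
relation "lying on a common cycle". -/
def IsBlock (G : Multigraph V E) (B : Finset E) : Prop :=
  ∃ e, (B : Set E) = {f | f = e ∨ ∃ C, G.IsCycle C ∧ e ∈ C ∧ f ∈ C}

/-- An end-block: a block containing at most one cut-vertex. -/
def EndBlock (G : Multigraph V E) (B : Finset E) : Prop :=
  G.IsBlock B ∧ ∀ a ∈ G.vertsOf B, ∀ b ∈ G.vertsOf B,
    G.CutVertex a → G.CutVertex b → a = b

end Multigraph

/-- Independence for a set system of circuits. -/
def MIndep {E : Type} (Circuits : Set (Finset E)) (X : Finset E) : Prop :=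
  ∀ C ∈ Circuits, ¬ C ⊆ X

/-- The matroid with the given circuits is connected. -/
def MConnected {E : Type} (Circuits : Set (Finset E)) : Prop :=
  ∀ e f : E, e ≠ f → ∃ C ∈ Circuits, e ∈ C ∧ f ∈ C

/-- The matroid with the given circuits is binary (representable over GF(2)). -/
def MBinary {E : Type} [Fintype E] [DecidableEq E] (Circuits : Set (Finset E)) : Prop :=
  ∃ (n : ℕ) (φ : E → (Fin n → ZMod 2)), ∀ X : Finset E,
    MIndep Circuits X ↔ LinearIndependent (ZMod 2) (fun e : {x // x ∈ X} => φ e.1)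


/-!
Read a cycle `C` of `H` inside the disjoint union `G0` of the parts `H_i`. Every vertex has degree
at most two in `C` and only terminals can have degree one, so either `C` lies in one part and is a
cycle there (and then it is connected in `Γ` too), or every vertex of `C` is joined inside its part
to a terminal of degree one. In `Γ` the terminals `y (s - 1)`, `z s`, `x (s + 1)` become one
vertex `u s`; an `x t`–`y t` path of `C` thus joins `u (t - 1)` to `u (t + 1)`, while a path
ending at `z t` joins `u t` to `u (t ± 1)`. Let `A t` say that `x t` has degree one. A handshake in
part `t` shows that `z t` has degree one exactly when `A` changes between `t` and `t + 1`, and as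
`z` has degree two in `H` there are at most two changes. If `A` fails somewhere, the classes `u s`
met by `C` form a single run, which `C` links up step by step. If `A` holds everywhere, the steps
`u (t - 1) ∼ u (t + 1)` connect all classes when `k` is odd or some `z t` lies on `C`; otherwise
`k` is even and `C` is made of `x i`–`y i` paths avoiding `z i`. Conversely, for even `k` such
paths form a cycle of `H` whose image in `Γ` splits according to the parity of the part index.
-/

open Finset

namespace Multigraph

section Reach

variable {V E : Type} {G : Multigraph V E} {C D : Finset E} {e : E} {a b v w : V}

lemma ReachE.refl : G.ReachE C a a := Relation.ReflTransGen.refl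

lemma ReachE.single (he : e ∈ C) (ha : a ∈ G.ends e) (hb : b ∈ G.ends e) : G.ReachE C a b :=
  Relation.ReflTransGen.single ⟨e, he, ha, hb⟩

lemma ReachE.trans (h₁ : G.ReachE C a b) (h₂ : G.ReachE C b w) : G.ReachE C a w :=
  Relation.ReflTransGen.trans h₁ h₂

lemma ReachE.symm (h : G.ReachE C a b) : G.ReachE C b a := by
  induction h with
  | refl => exact ReachE.refl
  | tail _ hstep ih =>
    obtain ⟨e, he, hc, hd⟩ := hstep
    exact (ReachE.single he hd hc).trans ih

lemma ReachE.mono (hCD : C ⊆ D) (h : G.ReachE C a b) : G.ReachE D a b :=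
  Relation.ReflTransGen.mono (fun _ _ ⟨e, he, ha, hb⟩ => ⟨e, hCD he, ha, hb⟩) _ _ h

lemma ReachE.eq_of_invariant {β : Type} {κ : V → β}
    (hκ : ∀ e ∈ C, ∀ a ∈ G.ends e, ∀ b ∈ G.ends e, κ a = κ b) (h : G.ReachE C a b) :
    κ a = κ b := by
  induction h with
  | refl => rfl
  | tail _ hstep ih =>
    obtain ⟨e, he, hc, hd⟩ := hstep
    exact ih.trans (hκ e he _ hc _ hd)

lemma reachE_eq_of_mem_ends (he : e ∈ C) (ha : a ∈ G.ends e) (hb : b ∈ G.ends e) (v : V) :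
    G.ReachE C v a = G.ReachE C v b :=
  propext ⟨fun h => h.trans (.single he ha hb), fun h => h.trans (.single he hb ha)⟩

end Reach

section Degree

variable {V E : Type} [DecidableEq V] {G : Multigraph V E} {C : Finset E} {e : E} {v : V}

def endCount (s : Sym2 V) (v : V) : ℕ :=
  Sym2.lift ⟨fun a b => (if a = v then 1 else 0) + (if b = v then 1 else 0),
    fun _ _ => add_comm _ _⟩ s

@[simp] lemma endCount_mk (a b v : V) :
    endCount s(a, b) v = (if a = v then 1 else 0) + (if b = v then 1 else 0) := rfl

lemma endCount_eq_zero_iff {s : Sym2 V} : endCount s v = 0 ↔ v ∉ s := by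
  induction s using Sym2.inductionOn with
  | hf a b => simp [Sym2.mem_iff, eq_comm]

lemma deg_eq_sum_endCount (C : Finset E) (v : V) :
    G.deg C v = ∑ e ∈ C, endCount (G.ends e) v := by
  refine sum_congr rfl fun e _ => ?_
  induction G.ends e using Sym2.inductionOn with
  | hf a b =>
    by_cases ha : a = v <;> by_cases hb : b = v <;> subst_vars <;>
      simp [Sym2.diag, Sym2.mem_iff, Ne.symm, *]

lemma deg_insert [DecidableEq E] (he : e ∉ C) (v : V) :
    G.deg (insert e C) v = G.deg C v + endCount (G.ends e) v := by
  simp only [deg_eq_sum_endCount, sum_insert he, add_comm]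

lemma deg_eq_zero_iff : G.deg C v = 0 ↔ ∀ e ∈ C, v ∉ G.ends e := by
  simp [deg_eq_sum_endCount, endCount_eq_zero_iff]

lemma deg_pos_of_mem (he : e ∈ C) (hv : v ∈ G.ends e) : 0 < G.deg C v :=
  Nat.pos_of_ne_zero fun h => deg_eq_zero_iff.mp h e he hv

variable [Fintype V]

lemma sum_endCount (s : Sym2 V) : ∑ v, endCount s v = 2 := by
  induction s using Sym2.inductionOn with
  | hf a b => simp [sum_add_distrib]

lemma sum_deg : ∑ v, G.deg C v = 2 * #C := by
  simp_rw [deg_eq_sum_endCount, sum_comm (s := univ), sum_endCount, sum_const, smul_eq_mul,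
    mul_comm]

lemma even_card_odd_deg (C : Finset E) : Even #{v | Odd (G.deg C v)} :=
  (even_sum_iff_even_card_odd _).mp (sum_deg (G := G) ▸ even_two_mul _)

lemma mem_vertsOf : v ∈ G.vertsOf C ↔ ∃ e ∈ C, v ∈ G.ends e := by
  simp [vertsOf]

lemma deg_pos_iff : 0 < G.deg C v ↔ v ∈ G.vertsOf C := by
  simp [Nat.pos_iff_ne_zero, deg_eq_zero_iff, mem_vertsOf]

lemma mem_vertsOf_of_mem (he : e ∈ C) (hv : v ∈ G.ends e) : v ∈ G.vertsOf C :=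
  mem_vertsOf.mpr ⟨e, he, hv⟩

lemma IsCycle.deg_eq_zero_or_two (hC : G.IsCycle C) (v : V) :
    G.deg C v = 0 ∨ G.deg C v = 2 := by
  rcases Nat.eq_zero_or_pos (G.deg C v) with h | h
  · exact .inl h
  · exact .inr (hC.2.2 v (deg_pos_iff.mp h))

lemma IsCycle.deg_le_two (hC : G.IsCycle C) (v : V) : G.deg C v ≤ 2 := by
  rcases hC.deg_eq_zero_or_two v with h | h <;> omega

lemma connectedOn_of_forall_invariant
    (h : ∀ κ : V → Prop, (∀ e ∈ C, ∀ a ∈ G.ends e, ∀ b ∈ G.ends e, κ a = κ b) →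
      ∀ u ∈ G.vertsOf C, ∀ w ∈ G.vertsOf C, κ u = κ w) :
    G.ConnectedOn C := by
  intro u hu w hw
  exact h _ (fun e he a ha b hb => reachE_eq_of_mem_ends he ha hb u) u hu w hw ▸ ReachE.refl

/-- Handshaking in the component of `v`. -/
lemma exists_ne_odd_deg_reachE (hv : Odd (G.deg C v)) :
    ∃ w ≠ v, Odd (G.deg C w) ∧ G.ReachE C v w := by
  classical
  set K := C.filter fun e => ∃ a ∈ G.ends e, G.ReachE C v a
  have hK : ∀ w, G.deg K w = if G.ReachE C v w then G.deg C w else 0 := by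
    intro w
    split_ifs with hw
    · rw [deg_eq_sum_endCount, deg_eq_sum_endCount, sum_filter]
      refine sum_congr rfl fun e _ => ?_
      by_cases hwe : w ∈ G.ends e
      · rw [if_pos ⟨w, hwe, hw⟩]
      · simp [endCount_eq_zero_iff.mpr hwe]
    · refine deg_eq_zero_iff.mpr fun e he hwe => hw ?_
      obtain ⟨heC, a, ha, hva⟩ := mem_filter.mp he
      exact hva.trans (.single heC ha hwe)
  have hvK : v ∈ ({w | Odd (G.deg K w)} : Finset V) := by
    simpa [hK, ReachE.refl] using hv
  obtain ⟨w, hwK, hwv⟩ := exists_mem_ne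
    (Nat.one_lt_of_ne_zero_of_even (card_ne_zero_of_mem hvK) (even_card_odd_deg K)) v
  have hw : G.ReachE C v w := by
    by_contra hw
    simp [hK, hw] at hwK
  exact ⟨w, hwv, by simpa [hK, hw] using hwK, hw⟩

end Degree

section Path

variable {V E : Type} [DecidableEq V] {G : Multigraph V E} {a b : V}

-- The degree identity is the form of "the ends have degree one and the inner vertices degree
-- two" that also holds for the trivial walk, so that it survives induction on `p`.
lemma exists_edges_of_isPath [DecidableEq E] {ok : E → Prop} {Gr : SimpleGraph V}
    (hadj : ∀ u v, Gr.Adj u v → ∃ e, ok e ∧ G.ends e = s(u, v)) (p : Gr.Walk a b)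
    (hp : p.IsPath) :
    ∃ P : Finset E, (∀ e ∈ P, ok e) ∧
      (∀ v, G.deg P v + (if v = a then 1 else 0) + (if v = b then 1 else 0) =
        if v ∈ p.support then 2 else 0) ∧
      ∀ v ∈ p.support, G.ReachE P a v := by
  induction p with
  | @nil u =>
    refine ⟨∅, by simp, fun v => ?_, by simpa using ReachE.refl⟩
    by_cases hv : v = u <;> simp [hv, deg]
  | @cons u v b h p ih =>
    rw [SimpleGraph.Walk.cons_isPath_iff] at hp
    obtain ⟨P, hok, hdeg, hreach⟩ := ih hp.1
    obtain ⟨e, hoke, hends⟩ := hadj u v h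
    have huv : u ≠ v := h.ne
    have hu : G.deg P u = 0 := by
      have := hdeg u
      simp only [hp.2, if_false, huv] at this
      omega
    have he : e ∉ P := fun he =>
      (deg_pos_of_mem he (hends ▸ Sym2.mem_mk_left u v)).ne' hu
    refine ⟨insert e P, ?_, fun w => ?_, ?_⟩
    · simpa [hoke] using hok
    · have := hdeg w
      rw [deg_insert he, hends, endCount_mk]
      simp only [SimpleGraph.Walk.support_cons, List.mem_cons]
      by_cases hwu : w = u
      · have hub : u ≠ b := fun hub => hp.2 (hub ▸ p.end_mem_support)
        subst hwu
        simp [hp.2, Ne.symm huv, hub, hu]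
      · by_cases hwv : w = v
        · simp_all
        · simp_all [Ne.symm hwu, Ne.symm hwv]
    · have hstep : G.ReachE (insert e P) u v :=
        .single (mem_insert_self e P) (hends ▸ Sym2.mem_mk_left u v)
          (hends ▸ Sym2.mem_mk_right u v)
      simp only [SimpleGraph.Walk.support_cons, List.mem_cons, forall_eq_or_imp]
      exact ⟨.refl, fun w hw => hstep.trans ((hreach w hw).mono (subset_insert e P))⟩

variable [Fintype V]

theorem exists_isPath_of_reflTransGen [DecidableEq E] {r : V → V → Prop}
    {ok : E → Prop} (hr : ∀ u v, r u v → u ≠ v → ∃ e, ok e ∧ G.ends e = s(u, v))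
    (h : Relation.ReflTransGen r a b) (hab : a ≠ b) :
    ∃ P : Finset E, (∀ e ∈ P, ok e) ∧ G.IsPath P a b := by
  have hreach : (SimpleGraph.fromRel r).Reachable a b := by
    clear hab
    induction h with
    | refl => rfl
    | @tail c d _ hcd ih =>
      by_cases hcd' : c = d
      · exact hcd' ▸ ih
      · exact ih.trans (SimpleGraph.Adj.reachable ⟨hcd', Or.inl hcd⟩)
  obtain ⟨p, hp⟩ := hreach.exists_isPath
  have hadj : ∀ u v, (SimpleGraph.fromRel r).Adj u v → ∃ e, ok e ∧ G.ends e = s(u, v) := by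
    rintro u v ⟨huv, huv' | hvu⟩
    · exact hr u v huv' huv
    · obtain ⟨e, he, hends⟩ := hr v u hvu (Ne.symm huv)
      exact ⟨e, he, hends.trans Sym2.eq_swap⟩
  obtain ⟨P, hok, hdeg, hreachP⟩ := exists_edges_of_isPath hadj p hp
  have hsupp : ∀ v ∈ G.vertsOf P, v ∈ p.support := by
    intro v hv
    by_contra hns
    have := hdeg v
    rw [← deg_pos_iff] at hv
    simp only [hns, if_false] at this
    omega
  have hdega : G.deg P a = 1 := by
    have := hdeg a
    simp only [hab, p.start_mem_support, if_true, if_false] at this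
    omega
  have hdegb : G.deg P b = 1 := by
    have := hdeg b
    simp only [Ne.symm hab, p.end_mem_support, if_true, if_false] at this
    omega
  refine ⟨P, hok, hab, fun u hu w hw => (hreachP u (hsupp u hu)).symm.trans
    (hreachP w (hsupp w hw)), deg_pos_iff.mp (by omega), deg_pos_iff.mp (by omega), hdega,
    hdegb, fun v hv hva hvb => ?_⟩
  have := hdeg v
  simpa [hva, hvb, hsupp v hv] using this

namespace IsPath

variable {P : Finset E} (hP : G.IsPath P a b)
include hP

lemma left_mem : a ∈ G.vertsOf P := hP.2.2.1

lemma right_mem : b ∈ G.vertsOf P := hP.2.2.2.1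

lemma deg_left : G.deg P a = 1 := hP.2.2.2.2.1

lemma deg_right : G.deg P b = 1 := hP.2.2.2.2.2.1

lemma deg_eq_two {v : V} (hv : v ∈ G.vertsOf P) (ha : v ≠ a) (hb : v ≠ b) : G.deg P v = 2 :=
  hP.2.2.2.2.2.2 v hv ha hb

lemma reachE {v : V} (hv : v ∈ G.vertsOf P) : G.ReachE P a v := hP.2.1 a hP.left_mem v hv

end IsPath

end Path

section Quotient

variable {V V' E : Type} {G : Multigraph V E} {G' : Multigraph V' E} {f : V → V'}
  (hf : ∀ e, G'.ends e = Sym2.map f (G.ends e)) {C : Finset E} {a b : V}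
include hf

lemma mem_ends_map {e : E} {w : V'} : w ∈ G'.ends e ↔ ∃ a ∈ G.ends e, f a = w := by
  rw [hf, Sym2.mem_map]

lemma ReachE.map (h : G.ReachE C a b) : G'.ReachE C (f a) (f b) := by
  induction h with
  | refl => exact .refl
  | tail _ hstep ih =>
    obtain ⟨e, he, hc, hd⟩ := hstep
    exact ih.trans (.single he ((mem_ends_map hf).mpr ⟨_, hc, rfl⟩)
      ((mem_ends_map hf).mpr ⟨_, hd, rfl⟩))

variable [Fintype V] [DecidableEq V]

lemma eq_of_reachE_map {β : Type} {φ : V → β}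
    (hedge : ∀ e ∈ C, ∀ a ∈ G.ends e, ∀ b ∈ G.ends e, φ a = φ b)
    (hfib : ∀ a ∈ G.vertsOf C, ∀ b ∈ G.vertsOf C, f a = f b → φ a = φ b)
    (ha : a ∈ G.vertsOf C) (hb : b ∈ G.vertsOf C) (h : G'.ReachE C (f a) (f b)) :
    φ a = φ b := by
  suffices ∀ q, G'.ReachE C (f a) q → ∀ b ∈ G.vertsOf C, f b = q → φ a = φ b from
    this _ h b hb rfl
  intro q hq
  induction hq with
  | refl => exact fun b hb hfb => hfib a ha b hb hfb.symm
  | tail _ hstep ih =>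
    obtain ⟨e, he, hc, hd⟩ := hstep
    obtain ⟨c, hce, rfl⟩ := (mem_ends_map hf).mp hc
    obtain ⟨d, hde, rfl⟩ := (mem_ends_map hf).mp hd
    intro b hb hfb
    rw [ih c (mem_vertsOf_of_mem he hce) rfl, hedge e he c hce d hde]
    exact hfib d (mem_vertsOf_of_mem he hde) b hb hfb.symm

variable [DecidableEq V']

lemma deg_map (w : V') : G'.deg C w = ∑ a with f a = w, G.deg C a := by
  have hends : ∀ s : Sym2 V, endCount (Sym2.map f s) w = ∑ a with f a = w, endCount s a := by
    intro s
    induction s using Sym2.inductionOn with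
    | hf a b => simp [sum_add_distrib, sum_ite_eq]
  simp only [deg_eq_sum_endCount, hf, hends]
  exact sum_comm

lemma sum_deg_le_deg_map {s : Finset V} {w : V'} (hs : ∀ a ∈ s, f a = w) :
    ∑ a ∈ s, G.deg C a ≤ G'.deg C w := by
  rw [deg_map hf]
  exact sum_le_sum_of_subset (fun a ha => mem_filter.mpr ⟨mem_univ a, hs a ha⟩)

variable [Fintype V']

lemma mem_vertsOf_map {w : V'} : w ∈ G'.vertsOf C ↔ ∃ a ∈ G.vertsOf C, f a = w := by
  simp only [mem_vertsOf, mem_ends_map hf]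
  exact ⟨fun ⟨e, he, a, ha, hfa⟩ => ⟨a, ⟨e, he, ha⟩, hfa⟩,
    fun ⟨a, ⟨e, he, ha⟩, hfa⟩ => ⟨e, he, a, ha, hfa⟩⟩

lemma connectedOn_map {v : V} (hv : ∀ a ∈ G.vertsOf C, G.ReachE C v a) :
    G'.ConnectedOn C := by
  intro u hu w hw
  obtain ⟨a, ha, rfl⟩ := (mem_vertsOf_map hf).mp hu
  obtain ⟨b, hb, rfl⟩ := (mem_vertsOf_map hf).mp hw
  exact ((hv a ha).map hf).symm.trans ((hv b hb).map hf)

end Quotient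

section Labelling

variable {V E ι : Type} {G : Multigraph V E} {part : E → ι} {τ : V → ι}
  (hτ : ∀ e, ∀ u ∈ G.ends e, τ u = part e) {C : Finset E} {a b v w : V}
include hτ

lemma ReachE.label_eq (h : G.ReachE C a b) : τ a = τ b := by
  induction h with
  | refl => rfl
  | tail _ hstep ih =>
    obtain ⟨e, -, hc, hd⟩ := hstep
    rw [ih, hτ e _ hc, hτ e _ hd]

lemma ReachE.reflTransGen_avoiding {z : V} (hz : ∀ e ∈ C, z ∉ G.ends e)
    (h : G.ReachE C a b) :
    Relation.ReflTransGen
      (fun u w => u ≠ z ∧ w ≠ z ∧ ∃ e, part e = τ a ∧ u ∈ G.ends e ∧ w ∈ G.ends e) a b := by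
  induction h with
  | refl => exact .refl
  | @tail c d hac hstep ih =>
    obtain ⟨e, he, hc, hd⟩ := hstep
    exact ih.tail ⟨fun h => hz e he (h ▸ hc), fun h => hz e he (h ▸ hd), e,
      ((ReachE.label_eq hτ hac).trans (hτ e c hc)).symm, hc, hd⟩

variable [DecidableEq V]

lemma deg_filter_part [DecidableEq ι] (t : ι) (v : V) :
    G.deg (C.filter (part · = t)) v = if τ v = t then G.deg C v else 0 := by
  split_ifs with hv
  · rw [deg_eq_sum_endCount, deg_eq_sum_endCount, sum_filter]
    refine sum_congr rfl fun e _ => ?_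
    by_cases hve : v ∈ G.ends e
    · rw [if_pos (hτ e v hve ▸ hv)]
    · simp [endCount_eq_zero_iff.mpr hve]
  · exact deg_eq_zero_iff.mpr fun e he hve => hv ((hτ e v hve).trans (mem_filter.mp he).2)

variable [Fintype V]

lemma even_card_odd_deg_label [DecidableEq ι] (t : ι) :
    Even #{v | τ v = t ∧ Odd (G.deg C v)} := by
  convert even_card_odd_deg (G := G) (C.filter (part · = t)) using 3 with v
  rw [deg_filter_part hτ]
  split_ifs with hv <;> simp [hv]

lemma reachE_of_odd_deg (hv : Odd (G.deg C v))
    (huniq : ∀ u, τ u = τ v → Odd (G.deg C u) → u = v ∨ u = w) : G.ReachE C v w := by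
  obtain ⟨u, huv, hu, hvu⟩ := exists_ne_odd_deg_reachE hv
  rcases huniq u (hvu.label_eq hτ).symm hu with rfl | rfl
  · exact absurd rfl huv
  · exact hvu

end Labelling

end Multigraph

namespace Fin

open Fin.CommRing

variable {k : ℕ} [NeZero k]

lemma induction_add_one {P : Fin k → Prop} (h0 : P 0) (hs : ∀ i, P i → P (i + 1))
    (i : Fin k) : P i := by
  have h : ∀ n : ℕ, P n := fun n => by
    induction n with
    | zero => simpa using h0
    | succ n ih => simpa using hs _ ih
  simpa using h i.val

lemma even_val_add_one_iff (hk : Even k) (t : Fin k) : Even (t + 1).val ↔ ¬Even t.val := by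
  have hk1 : 1 < k := by
    obtain ⟨m, hm⟩ := hk
    have := NeZero.ne k
    omega
  rw [Fin.val_add, Fin.val_one', Nat.mod_eq_of_lt hk1, Nat.even_iff,
    Nat.mod_mod_of_dvd _ (even_iff_two_dvd.mp hk), ← Nat.even_iff, Nat.even_add_one]

section Periodic

variable {β : Type} {c : Fin k → β} (h2 : ∀ t, c t = c (t + 2))
include h2

lemma apply_eq_apply_add_two_mul (t : Fin k) (n : ℕ) : c t = c (t + 2 * n) := by
  induction n with
  | zero => simp
  | succ n ih =>
    rw [ih, h2]
    congr 1
    push_cast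
    ring

lemma apply_eq_of_apply_add_one {t₀ : Fin k} (h1 : c t₀ = c (t₀ + 1)) (s : Fin k) :
    c s = c t₀ := by
  have h : ∀ i, c (t₀ + i) = c t₀ ∧ c (t₀ + i + 1) = c t₀ :=
    induction_add_one ⟨by simp, by simpa using h1.symm⟩ fun i ⟨hi, hi1⟩ =>
      ⟨by rwa [← add_assoc], by rw [show t₀ + (i + 1) + 1 = t₀ + i + 2 by ring, ← h2, hi]⟩
  simpa using (h (s - t₀)).1

lemma apply_eq_apply_add_one_of_odd (hk : Odd k) (t : Fin k) : c t = c (t + 1) := by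
  obtain ⟨m, hm⟩ := hk
  have hcast : (2 * ((m + 1 : ℕ) : Fin k)) = 1 := by
    have : ((2 * (m + 1) : ℕ) : Fin k) = ((k : ℕ) : Fin k) + 1 := by
      rw [show 2 * (m + 1) = k + 1 by omega]
      push_cast
      rfl
    simpa [Fin.natCast_self] using this
  rw [apply_eq_apply_add_two_mul h2 t (m + 1), hcast]

end Periodic

section Runs

variable {β : Type} {c : Fin k → β} {A : Fin k → Prop}
  (hin : ∀ t, A t → A (t + 1) → c (t - 1) = c (t + 1))
  (hrise : ∀ t, ¬A t → A (t + 1) → c t = c (t + 1))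
include hin hrise

lemma apply_eq_of_run {r : Fin k} (hr : ¬A r) (n : ℕ) (hA : ∀ j ≤ n, A (r + 1 + j)) :
    c (r + n) = c r ∧ c (r + 1 + n) = c r := by
  induction n with
  | zero => exact ⟨by simp, by simpa using (hrise r hr (by simpa using hA 0 le_rfl)).symm⟩
  | succ n ih =>
    obtain ⟨hn0, hn⟩ := ih fun j hj => hA j (by omega)
    have hstep := hin (r + 1 + n) (hA n (by omega))
      (by simpa [add_assoc] using hA (n + 1) le_rfl)
    refine ⟨by rwa [Nat.cast_succ, add_comm (n : Fin k), ← add_assoc], ?_⟩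
    rw [Nat.cast_succ, ← add_assoc, ← hstep, ← hn0]
    congr 1
    ring

lemma exists_rise_apply_eq (hnot : ∃ t, ¬A t) {s : Fin k} (hs : A s) :
    ∃ r, ¬A r ∧ A (r + 1) ∧ c s = c r := by
  classical
  have hex : ∃ n : ℕ, ¬A (s - (n + 1 : ℕ)) := by
    obtain ⟨t, ht⟩ := hnot
    exact ⟨(s - t - 1).val, by simpa using ht⟩
  obtain ⟨n, hn, hmin⟩ : ∃ n : ℕ, ¬A (s - (n + 1 : ℕ)) ∧ ∀ m < n, A (s - (m + 1 : ℕ)) :=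
    ⟨Nat.find hex, Nat.find_spec hex, fun m hm => not_not.mp (Nat.find_min hex hm)⟩
  have hrun : ∀ j ≤ n, A (s - (n + 1 : ℕ) + 1 + j) := by
    intro j hj
    rcases Nat.lt_or_ge j n with hjn | hjn
    · convert hmin (n - j - 1) (by omega) using 2
      rw [show n - j - 1 + 1 = n - j by omega, Nat.cast_sub hjn.le]
      push_cast
      ring
    · convert hs using 2
      rw [show j = n by omega]
      push_cast
      ring
  refine ⟨_, hn, by simpa using hrun 0 (Nat.zero_le _), ?_⟩
  rw [← (apply_eq_of_run hin hrise hn n hrun).2]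
  congr 1
  push_cast
  ring

omit hin hrise in
lemma rise_unique (hfew : ∀ t₁ t₂ t₃, (A t₁ ↔ ¬A (t₁ + 1)) → (A t₂ ↔ ¬A (t₂ + 1)) →
      (A t₃ ↔ ¬A (t₃ + 1)) → t₁ ≠ t₂ → t₁ ≠ t₃ → t₂ ≠ t₃ → False)
    {r r' : Fin k} (hr : ¬A r) (hr1 : A (r + 1)) (hr' : ¬A r') (hr1' : A (r' + 1)) :
    r = r' := by
  by_contra hne
  have hnodrop : ∀ t, A t → A (t + 1) := by
    intro t ht
    by_contra ht1
    exact hfew t r r' (iff_of_true ht ht1) (iff_of_false hr (not_not.mpr hr1))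
      (iff_of_false hr' (not_not.mpr hr1')) (fun h => hr (h ▸ ht)) (fun h => hr' (h ▸ ht)) hne
  have hall : ∀ i, A (r + 1 + i) := induction_add_one (by simpa using hr1)
    fun i hi => by simpa [add_assoc] using hnodrop _ hi
  exact hr' (by simpa using hall (r' - r - 1))

/-- Each point of the run of `A` is tied to the rise `r` at which the run starts, and there is
only one rise. -/
lemma apply_eq_of_few_transitions (hfew : ∀ t₁ t₂ t₃, (A t₁ ↔ ¬A (t₁ + 1)) →
      (A t₂ ↔ ¬A (t₂ + 1)) → (A t₃ ↔ ¬A (t₃ + 1)) → t₁ ≠ t₂ → t₁ ≠ t₃ → t₂ ≠ t₃ → False)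
    (hnot : ∃ t, ¬A t) {s s' : Fin k} (hs : A s ∨ A (s + 1)) (hs' : A s' ∨ A (s' + 1)) :
    c s = c s' := by
  have hrise_of : ∀ s, A s ∨ A (s + 1) → ∃ r, ¬A r ∧ A (r + 1) ∧ c s = c r := by
    intro s hs
    by_cases hAs : A s
    · exact exists_rise_apply_eq hin hrise hnot hAs
    · exact ⟨s, hAs, hs.resolve_left hAs, rfl⟩
  obtain ⟨r, hr, hr1, hcr⟩ := hrise_of s hs
  obtain ⟨r', hr', hr1', hcr'⟩ := hrise_of s' hs'
  rw [hcr, hcr', rise_unique hfew hr hr1 hr' hr1']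

end Runs

end Fin

/-- `G0` is the disjoint union of the graphs `H_i`, with `τ` and `part` giving the index `i` of a
vertex and of an edge; `H` is the quotient of `G0` by `fH`, and the underlying graph `Γ` of `Ω` is
its quotient by `fΓ`. -/
structure ConsecutiveTwisting {V E VH VΓ : Type} {k : ℕ} [NeZero k] (G0 : Multigraph V E)
    (part : E → Fin k) (τ : V → Fin k) (x y z : Fin k → V) (H : Multigraph VH E)
    (fH : V → VH) (Γ : Multigraph VΓ E) (fΓ : V → VΓ) : Prop where
  tau_ends : ∀ e, ∀ u ∈ G0.ends e, τ u = part e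
  tau_x : ∀ i, τ (x i) = i
  tau_y : ∀ i, τ (y i) = i
  tau_z : ∀ i, τ (z i) = i
  x_ne_y : ∀ i, x i ≠ y i
  x_ne_z : ∀ i, x i ≠ z i
  y_ne_z : ∀ i, y i ≠ z i
  fH_eq_iff : ∀ u u', fH u = fH u' ↔ (u = u' ∨ (∃ i j, u = z i ∧ u' = z j) ∨
    ∃ i, (u = y (i - 1) ∧ u' = x i) ∨ (u = x i ∧ u' = y (i - 1)))
  H_ends : ∀ e, H.ends e = Sym2.map fH (G0.ends e)
  fΓ_eq_iff : ∀ u u', fΓ u = fΓ u' ↔ (u = u' ∨ ∃ i,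
    u ∈ ({y (i - 1), z i, x (i + 1)} : Set V) ∧ u' ∈ ({y (i - 1), z i, x (i + 1)} : Set V))
  Γ_ends : ∀ e, Γ.ends e = Sym2.map fΓ (G0.ends e)

namespace ConsecutiveTwisting

open Multigraph Finset Fin.CommRing

variable {V E VH VΓ : Type} {k : ℕ} [NeZero k] {G0 : Multigraph V E} {part : E → Fin k}
  {τ : V → Fin k} {x y z : Fin k → V} {H : Multigraph VH E} {fH : V → VH}
  {Γ : Multigraph VΓ E} {fΓ : V → VΓ} (T : ConsecutiveTwisting G0 part τ x y z H fH Γ fΓ)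
include T

lemma x_injective : Function.Injective x := fun i j h => by
  rw [← T.tau_x i, h, T.tau_x]

lemma x_ne_y' (i j : Fin k) : x i ≠ y j := fun h => by
  obtain rfl : i = j := by rw [← T.tau_x i, h, T.tau_y]
  exact T.x_ne_y i h

lemma x_ne_z' (i j : Fin k) : x i ≠ z j := fun h => by
  obtain rfl : i = j := by rw [← T.tau_x i, h, T.tau_z]
  exact T.x_ne_z i h

lemma z_injective : Function.Injective z := fun i j h => by
  rw [← T.tau_z i, h, T.tau_z]

lemma fH_y (t : Fin k) : fH (y t) = fH (x (t + 1)) :=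
  (T.fH_eq_iff _ _).mpr (.inr (.inr ⟨t + 1, .inl ⟨by rw [add_sub_cancel_right], rfl⟩⟩))

lemma fH_z (i j : Fin k) : fH (z i) = fH (z j) :=
  (T.fH_eq_iff _ _).mpr (.inr (.inl ⟨i, j, rfl, rfl⟩))

lemma fH_eq_fH_x_iff (u : V) (t : Fin k) : fH u = fH (x t) ↔ u = x t ∨ u = y (t - 1) := by
  rw [T.fH_eq_iff]
  constructor
  · rintro (h | ⟨i, j, rfl, h⟩ | ⟨i, ⟨rfl, h⟩ | ⟨rfl, h⟩⟩)
    · exact .inl h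
    · exact absurd h (T.x_ne_z' _ _)
    · obtain rfl := T.x_injective h
      exact .inr rfl
    · exact absurd h (T.x_ne_y' _ _)
  · rintro (rfl | rfl)
    · exact .inl rfl
    · exact .inr (.inr ⟨t, .inl ⟨rfl, rfl⟩⟩)

lemma fH_eq_fH_iff_of_ne {u v : V} (hv : ∀ i, v ≠ x i ∧ v ≠ y i ∧ v ≠ z i) :
    fH u = fH v ↔ u = v := by
  rw [T.fH_eq_iff]
  constructor
  · rintro (h | ⟨i, j, -, rfl⟩ | ⟨i, ⟨-, rfl⟩ | ⟨-, rfl⟩⟩)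
    · exact h
    · exact absurd rfl (hv j).2.2
    · exact absurd rfl (hv i).1
    · exact absurd rfl (hv (i - 1)).2.1
  · exact .inl

lemma fΓ_x (t : Fin k) : fΓ (x t) = fΓ (z (t - 1)) :=
  (T.fΓ_eq_iff _ _).mpr (.inr ⟨t - 1, by simp, by simp⟩)

lemma fΓ_y (t : Fin k) : fΓ (y t) = fΓ (z (t + 1)) :=
  (T.fΓ_eq_iff _ _).mpr (.inr ⟨t + 1, by simp, by simp⟩)

section Degree

variable [Fintype V] [DecidableEq V] [DecidableEq VH] {C : Finset E}

lemma deg_H_x (t : Fin k) :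
    H.deg C (fH (x t)) = G0.deg C (x t) + G0.deg C (y (t - 1)) := by
  rw [deg_map T.H_ends]
  have hfib : ({a | fH a = fH (x t)} : Finset V) = {x t, y (t - 1)} := by
    ext a
    simp [T.fH_eq_fH_x_iff]
  rw [hfib, sum_pair (T.x_ne_y' _ _)]

lemma deg_H_of_ne {v : V} (hv : ∀ i, v ≠ x i ∧ v ≠ y i ∧ v ≠ z i) :
    H.deg C (fH v) = G0.deg C v := by
  rw [deg_map T.H_ends]
  have hfib : ({a | fH a = fH v} : Finset V) = {v} := by
    ext a
    simp [T.fH_eq_fH_iff_of_ne hv]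
  rw [hfib, sum_singleton]

end Degree

section Cycle

variable [Fintype V] [DecidableEq V] [Fintype VH] [DecidableEq VH] {C : Finset E}
  (hC : H.IsCycle C)
include hC

lemma deg_x_eq_one_iff (t : Fin k) : G0.deg C (x (t + 1)) = 1 ↔ G0.deg C (y t) = 1 := by
  have h := T.deg_H_x (C := C) (t + 1)
  rw [add_sub_cancel_right] at h
  rcases hC.deg_eq_zero_or_two (fH (x (t + 1))) with h' | h' <;> omega

lemma deg_le_two (v : V) : G0.deg C v ≤ 2 := by
  have := sum_deg_le_deg_map T.H_ends (C := C) (s := {v}) (w := fH v) (by simp)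
  rw [sum_singleton] at this
  exact this.trans (hC.deg_le_two _)

lemma deg_eq_one_of_fH_eq {a b : V} (hab : a ≠ b) (h : fH a = fH b) (ha : 0 < G0.deg C a)
    (hb : 0 < G0.deg C b) : G0.deg C a = 1 := by
  have := sum_deg_le_deg_map T.H_ends (C := C) (s := {a, b}) (w := fH a) (by simp [h])
  rw [sum_pair hab] at this
  have := hC.deg_le_two (fH a)
  omega

lemma deg_eq_one_and_terminal_of_odd {v : V} (hv : Odd (G0.deg C v)) :
    G0.deg C v = 1 ∧ (v = x (τ v) ∨ v = y (τ v) ∨ v = z (τ v)) := by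
  refine ⟨by obtain ⟨m, hm⟩ := hv; have := T.deg_le_two hC v; omega, ?_⟩
  by_contra hne
  have hv' : ∀ i, v ≠ x i ∧ v ≠ y i ∧ v ≠ z i := fun i => by
    refine ⟨fun h => hne ?_, fun h => hne ?_, fun h => hne ?_⟩ <;> subst h <;>
      simp [T.tau_x, T.tau_y, T.tau_z]
  have h := T.deg_H_of_ne (C := C) hv'
  rw [Nat.odd_iff] at hv
  rcases hC.deg_eq_zero_or_two (fH v) with h' | h' <;> omega

lemma deg_z_eq_one_iff (t : Fin k) :
    G0.deg C (z t) = 1 ↔ (G0.deg C (x t) = 1 ↔ ¬G0.deg C (x (t + 1)) = 1) := by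
  have hset : ({v | τ v = t ∧ Odd (G0.deg C v)} : Finset V) =
      ({x t, y t, z t} : Finset V).filter (G0.deg C · = 1) := by
    ext v
    simp only [mem_filter, mem_univ, true_and, mem_insert, mem_singleton]
    constructor
    · rintro ⟨rfl, hv⟩
      exact ⟨(T.deg_eq_one_and_terminal_of_odd hC hv).2, (T.deg_eq_one_and_terminal_of_odd hC hv).1⟩
    · rintro ⟨hv | hv | hv, h1⟩ <;> subst hv <;> simp [T.tau_x, T.tau_y, T.tau_z, h1]
  have heven := even_card_odd_deg_label T.tau_ends (C := C) t
  rw [hset, card_filter, sum_insert (by simp [T.x_ne_y, T.x_ne_z]),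
    sum_insert (by simp [T.y_ne_z]), sum_singleton, Nat.even_iff] at heven
  simp only [← T.deg_x_eq_one_iff hC t] at heven
  split_ifs at heven <;> simp_all

lemma not_three_deg_z_eq_one {t₁ t₂ t₃ : Fin k} (h₁₂ : t₁ ≠ t₂) (h₁₃ : t₁ ≠ t₃)
    (h₂₃ : t₂ ≠ t₃) (h₁ : G0.deg C (z t₁) = 1) (h₂ : G0.deg C (z t₂) = 1)
    (h₃ : G0.deg C (z t₃) = 1) : False := by
  have := sum_deg_le_deg_map T.H_ends (C := C) (s := {z t₁, z t₂, z t₃}) (w := fH (z t₁))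
    (by simp only [mem_insert, mem_singleton]; rintro a (rfl | rfl | rfl) <;> exact T.fH_z _ _)
  rw [sum_insert (by simp [T.z_injective.ne h₁₂, T.z_injective.ne h₁₃]),
    sum_pair (T.z_injective.ne h₂₃)] at this
  have := hC.deg_le_two (fH (z t₁))
  omega

lemma reachE_x_y {t : Fin k} (hx : G0.deg C (x t) = 1) (hx' : G0.deg C (x (t + 1)) = 1) :
    G0.ReachE C (x t) (y t) := by
  refine reachE_of_odd_deg T.tau_ends (by rw [hx]; exact odd_one) fun u hu hodd => ?_
  rw [T.tau_x] at hu
  obtain ⟨h1, hu'⟩ := T.deg_eq_one_and_terminal_of_odd hC hodd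
  rw [hu] at hu'
  rcases hu' with rfl | rfl | rfl
  · exact .inl rfl
  · exact .inr rfl
  · exact absurd ((T.deg_z_eq_one_iff hC t).mp h1) (by simp [hx, hx'])

lemma reachE_y_z {t : Fin k} (hx : G0.deg C (x t) ≠ 1) (hx' : G0.deg C (x (t + 1)) = 1) :
    G0.ReachE C (y t) (z t) := by
  have hy : G0.deg C (y t) = 1 := (T.deg_x_eq_one_iff hC t).mp hx'
  refine reachE_of_odd_deg T.tau_ends (by rw [hy]; exact odd_one) fun u hu hodd => ?_
  rw [T.tau_y] at hu
  obtain ⟨h1, hu'⟩ := T.deg_eq_one_and_terminal_of_odd hC hodd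
  rw [hu] at hu'
  rcases hu' with rfl | rfl | rfl
  · exact absurd h1 hx
  · exact .inl rfl
  · exact .inr rfl

lemma exists_index_of_deg_eq_one {w : V} (hw : G0.deg C w = 1) :
    ∃ s, (G0.deg C (x s) = 1 ∨ G0.deg C (x (s + 1)) = 1) ∧ fΓ w = fΓ (z s) := by
  obtain ⟨-, hw'⟩ := T.deg_eq_one_and_terminal_of_odd hC (by rw [hw]; exact odd_one)
  obtain ⟨t, ht⟩ : ∃ t, τ w = t := ⟨_, rfl⟩
  rw [ht] at hw'
  rcases hw' with rfl | rfl | rfl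
  · exact ⟨t - 1, .inr (by rwa [sub_add_cancel]), T.fΓ_x t⟩
  · exact ⟨t + 1, .inl ((T.deg_x_eq_one_iff hC t).mpr hw), T.fΓ_y t⟩
  · exact ⟨t, by have := (T.deg_z_eq_one_iff hC t).mp hw; tauto, rfl⟩

section

variable {κ : VΓ → Prop} (hκ : ∀ e ∈ C, ∀ a ∈ Γ.ends e, ∀ b ∈ Γ.ends e, κ a = κ b)
include hκ

lemma eq_of_deg_x_eq_one {t : Fin k} (hx : G0.deg C (x t) = 1)
    (hx' : G0.deg C (x (t + 1)) = 1) : κ (fΓ (z (t - 1))) = κ (fΓ (z (t + 1))) := by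
  rw [← T.fΓ_x, ← T.fΓ_y]
  exact ((T.reachE_x_y hC hx hx').map T.Γ_ends).eq_of_invariant hκ

lemma eq_of_deg_x_ne_one {t : Fin k} (hx : G0.deg C (x t) ≠ 1)
    (hx' : G0.deg C (x (t + 1)) = 1) : κ (fΓ (z t)) = κ (fΓ (z (t + 1))) := by
  rw [← T.fΓ_y]
  exact (((T.reachE_y_z hC hx hx').map T.Γ_ends).eq_of_invariant hκ).symm

end

variable [Fintype VΓ] [DecidableEq VΓ]

lemma connectedOn_of_reachE_deg_ne_one {v₀ : V} (hv₀ : v₀ ∈ G0.vertsOf C)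
    (hno : ∀ w, G0.ReachE C v₀ w → G0.deg C w ≠ 1) : Γ.ConnectedOn C := by
  refine connectedOn_map T.Γ_ends (v := v₀) fun a ha => ?_
  have hfib : ∀ a ∈ G0.vertsOf C, ∀ b ∈ G0.vertsOf C, fH a = fH b →
      G0.ReachE C v₀ a = G0.ReachE C v₀ b := by
    intro a ha b hb hab
    by_cases h : a = b
    · rw [h]
    have ha1 := T.deg_eq_one_of_fH_eq hC h hab (deg_pos_iff.mpr ha) (deg_pos_iff.mpr hb)
    have hb1 := T.deg_eq_one_of_fH_eq hC (Ne.symm h) hab.symm (deg_pos_iff.mpr hb)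
      (deg_pos_iff.mpr ha)
    exact propext ⟨fun h' => absurd ha1 (hno a h'), fun h' => absurd hb1 (hno b h')⟩
  have hreach := hC.2.1 _ ((mem_vertsOf_map T.H_ends).mpr ⟨v₀, hv₀, rfl⟩) _
    ((mem_vertsOf_map T.H_ends).mpr ⟨a, ha, rfl⟩)
  exact eq_of_reachE_map T.H_ends (fun e he a ha b hb => reachE_eq_of_mem_ends he ha hb v₀)
    hfib hv₀ ha hreach ▸ .refl

lemma connectedOn_of_forall_eq
    (hreach : ∀ v ∈ G0.vertsOf C, ∃ w, G0.ReachE C v w ∧ G0.deg C w = 1)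
    (h : ∀ κ : VΓ → Prop, (∀ e ∈ C, ∀ a ∈ Γ.ends e, ∀ b ∈ Γ.ends e, κ a = κ b) →
      ∀ s s', (G0.deg C (x s) = 1 ∨ G0.deg C (x (s + 1)) = 1) →
        (G0.deg C (x s') = 1 ∨ G0.deg C (x (s' + 1)) = 1) → κ (fΓ (z s)) = κ (fΓ (z s'))) :
    Γ.ConnectedOn C := by
  refine connectedOn_of_forall_invariant fun κ hκ => ?_
  have key : ∀ u ∈ Γ.vertsOf C, ∃ s, (G0.deg C (x s) = 1 ∨ G0.deg C (x (s + 1)) = 1) ∧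
      κ u = κ (fΓ (z s)) := by
    intro u hu
    obtain ⟨a, ha, rfl⟩ := (mem_vertsOf_map T.Γ_ends).mp hu
    obtain ⟨w, haw, hw⟩ := hreach a ha
    obtain ⟨s, hs, hws⟩ := T.exists_index_of_deg_eq_one hC hw
    exact ⟨s, hs, ((haw.map T.Γ_ends).eq_of_invariant hκ).trans (congrArg κ hws)⟩
  intro u hu w hw
  obtain ⟨s, hs, hus⟩ := key u hu
  obtain ⟨s', hs', hws⟩ := key w hw
  rw [hus, hws, h κ hκ s s' hs hs']

lemma connectedOn_of_exists_deg_x_ne_one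
    (hreach : ∀ v ∈ G0.vertsOf C, ∃ w, G0.ReachE C v w ∧ G0.deg C w = 1)
    (hx : ∃ t, G0.deg C (x t) ≠ 1) : Γ.ConnectedOn C :=
  T.connectedOn_of_forall_eq hC hreach fun _ hκ _ _ hs hs' =>
    Fin.apply_eq_of_few_transitions (fun _ => T.eq_of_deg_x_eq_one hC hκ)
      (fun _ => T.eq_of_deg_x_ne_one hC hκ)
      (fun _ _ _ h₁ h₂ h₃ h₁₂ h₁₃ h₂₃ => T.not_three_deg_z_eq_one hC h₁₂ h₁₃ h₂₃
        ((T.deg_z_eq_one_iff hC _).mpr h₁) ((T.deg_z_eq_one_iff hC _).mpr h₂)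
        ((T.deg_z_eq_one_iff hC _).mpr h₃)) hx hs hs'

lemma connectedOn_of_forall_deg_x_eq_one
    (hreach : ∀ v ∈ G0.vertsOf C, ∃ w, G0.ReachE C v w ∧ G0.deg C w = 1)
    (hx : ∀ t, G0.deg C (x t) = 1) (hlink : Even k → ∃ i, G0.deg C (z i) ≠ 0) :
    Γ.ConnectedOn C := by
  refine T.connectedOn_of_forall_eq hC hreach fun κ hκ s s' _ _ => ?_
  set c : Fin k → Prop := fun s => κ (fΓ (z s))
  have h2 : ∀ t, c t = c (t + 2) := fun t => by
    have := T.eq_of_deg_x_eq_one hC hκ (hx (t + 1)) (hx (t + 1 + 1))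
    rwa [add_sub_cancel_right, add_assoc, one_add_one_eq_two] at this
  obtain ⟨t₀, ht₀⟩ : ∃ t₀, c t₀ = c (t₀ + 1) := by
    by_cases hk : Even k
    · obtain ⟨i, hi⟩ := hlink hk
      obtain ⟨w, hzw, hw⟩ := hreach (z i) (deg_pos_iff.mp (Nat.pos_of_ne_zero hi))
      have hcw : c i = κ (fΓ w) := (hzw.map T.Γ_ends).eq_of_invariant hκ
      obtain ⟨-, hw'⟩ := T.deg_eq_one_and_terminal_of_odd hC (by rw [hw]; exact odd_one)
      rw [← ReachE.label_eq T.tau_ends hzw, T.tau_z] at hw'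
      rcases hw' with rfl | rfl | rfl
      · exact ⟨i - 1, by rw [sub_add_cancel, hcw, T.fΓ_x]⟩
      · exact ⟨i, by rw [hcw, T.fΓ_y]⟩
      · exact absurd ((T.deg_z_eq_one_iff hC i).mp hw) (by simp [hx])
    · exact ⟨0, Fin.apply_eq_apply_add_one_of_odd h2 (Nat.not_even_iff_odd.mp hk) 0⟩
  exact (Fin.apply_eq_of_apply_add_one h2 ht₀ s).trans
    (Fin.apply_eq_of_apply_add_one h2 ht₀ s').symm

theorem connectedOn_or_reflTransGen :
    Γ.ConnectedOn C ∨ (Even k ∧ ∀ i, Relation.ReflTransGen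
      (fun a b => a ≠ z i ∧ b ≠ z i ∧ ∃ e, part e = i ∧ a ∈ G0.ends e ∧ b ∈ G0.ends e)
      (x i) (y i)) := by
  by_cases hclosed : ∃ v₀ ∈ G0.vertsOf C, ∀ w, G0.ReachE C v₀ w → G0.deg C w ≠ 1
  · obtain ⟨v₀, hv₀, hno⟩ := hclosed
    exact .inl (T.connectedOn_of_reachE_deg_ne_one hC hv₀ hno)
  push Not at hclosed
  by_cases hx : ∀ t, G0.deg C (x t) = 1
  · by_cases hexc : Even k ∧ ∀ i, G0.deg C (z i) = 0
    · refine .inr ⟨hexc.1, fun i => ?_⟩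
      have := (T.reachE_x_y hC (hx i) (hx (i + 1))).reflTransGen_avoiding T.tau_ends
        (deg_eq_zero_iff.mp (hexc.2 i))
      rwa [T.tau_x] at this
    · push Not at hexc
      exact .inl (T.connectedOn_of_forall_deg_x_eq_one hC hclosed hx hexc)
  · push Not at hx
    exact .inl (T.connectedOn_of_exists_deg_x_ne_one hC hclosed hx)

end Cycle

section Converse

variable [Fintype V] [DecidableEq V] [DecidableEq E]

lemma exists_isPath (i : Fin k) (h : Relation.ReflTransGen
      (fun a b => a ≠ z i ∧ b ≠ z i ∧ ∃ e, part e = i ∧ a ∈ G0.ends e ∧ b ∈ G0.ends e)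
      (x i) (y i)) :
    ∃ P : Finset E, (∀ e ∈ P, part e = i ∧ z i ∉ G0.ends e) ∧ G0.IsPath P (x i) (y i) := by
  refine exists_isPath_of_reflTransGen (fun u v ⟨hu, hv, e, he, hue, hve⟩ huv => ?_) h
    (T.x_ne_y i)
  have hends := (Sym2.mem_and_mem_iff huv).mp ⟨hue, hve⟩
  exact ⟨e, ⟨he, by simp [hends, Sym2.mem_iff, Ne.symm hu, Ne.symm hv]⟩, hends⟩

section Union

variable {P : Fin k → Finset E} (hpart : ∀ i, ∀ e ∈ P i, part e = i ∧ z i ∉ G0.ends e)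
include hpart

omit [Fintype V] in
lemma deg_biUnion (v : V) : G0.deg (univ.biUnion P) v = G0.deg (P (τ v)) v := by
  have hfilter : (univ.biUnion P).filter (part · = τ v) = P (τ v) := by
    ext e
    simp only [mem_filter, mem_biUnion, mem_univ, true_and]
    exact ⟨fun ⟨⟨i, hi⟩, he⟩ => (he.symm.trans (hpart i e hi).1) ▸ hi,
      fun he => ⟨⟨_, he⟩, (hpart _ e he).1⟩⟩
  rw [← hfilter, deg_filter_part T.tau_ends, if_pos rfl]

lemma mem_vertsOf_biUnion_iff {v : V} :
    v ∈ G0.vertsOf (univ.biUnion P) ↔ v ∈ G0.vertsOf (P (τ v)) := by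
  rw [← deg_pos_iff, T.deg_biUnion hpart, deg_pos_iff]

lemma z_notMem_vertsOf_biUnion (j : Fin k) : z j ∉ G0.vertsOf (univ.biUnion P) := by
  intro hz
  obtain ⟨e, he, hze⟩ := mem_vertsOf.mp hz
  obtain ⟨i, -, hei⟩ := mem_biUnion.mp he
  obtain ⟨hi, hzi⟩ := hpart i e hei
  obtain rfl : j = i := by rw [← T.tau_z j, T.tau_ends e _ hze, hi]
  exact hzi hze

variable (hpath : ∀ i, G0.IsPath (P i) (x i) (y i))
include hpath

lemma x_mem_vertsOf_biUnion (t : Fin k) : x t ∈ G0.vertsOf (univ.biUnion P) := by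
  rw [T.mem_vertsOf_biUnion_iff hpart, T.tau_x]
  exact (hpath t).left_mem

section

variable [Fintype VΓ] [DecidableEq VΓ]

lemma not_connectedOn_biUnion (hk : Even k) : ¬Γ.ConnectedOn (univ.biUnion P) := by
  intro hconn
  -- The parity of the part index is constant on the vertices of `C` in a class `u i`,
  -- because these are among `y (i - 1)` and `x (i + 1)`.
  have hclass : ∀ i, ∀ a ∈ G0.vertsOf (univ.biUnion P),
      a ∈ ({y (i - 1), z i, x (i + 1)} : Set V) → Even (τ a).val = Even (i - 1).val := by
    intro i a ha hmem
    rcases hmem with rfl | rfl | rfl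
    · rw [T.tau_y]
    · exact absurd ha (T.z_notMem_vertsOf_biUnion hpart i)
    · rw [T.tau_x, show i + 1 = i - 1 + 1 + 1 by ring, Fin.even_val_add_one_iff hk,
        Fin.even_val_add_one_iff hk, not_not]
  have hx := T.x_mem_vertsOf_biUnion hpart hpath
  have h01 := eq_of_reachE_map T.Γ_ends (φ := fun v => Even (τ v).val)
    (fun e _ a ha b hb => by simp only [T.tau_ends e a ha, T.tau_ends e b hb])
    (fun a ha b hb hab => by
      rcases (T.fΓ_eq_iff a b).mp hab with rfl | ⟨i, hai, hbi⟩
      · rfl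
      · rw [hclass i a ha hai, hclass i b hb hbi])
    (hx 0) (hx 1) (hconn _ ((mem_vertsOf_map T.Γ_ends).mpr ⟨_, hx 0, rfl⟩) _
      ((mem_vertsOf_map T.Γ_ends).mpr ⟨_, hx 1, rfl⟩))
  have h1 := Fin.even_val_add_one_iff hk 0
  simp only [T.tau_x, zero_add] at h01 h1
  rw [← h01] at h1
  exact iff_not_self h1

end

variable [Fintype VH] [DecidableEq VH]

omit hpart in
lemma connectedOn_biUnion : H.ConnectedOn (univ.biUnion P) := by
  have hpartReach : ∀ i, ∀ v ∈ G0.vertsOf (P i),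
      H.ReachE (univ.biUnion P) (fH (x i)) (fH v) := fun i v hv =>
    (((hpath i).reachE hv).mono (subset_biUnion_of_mem P (mem_univ i))).map T.H_ends
  have hx₀ : ∀ i, H.ReachE (univ.biUnion P) (fH (x 0)) (fH (x i)) :=
    Fin.induction_add_one .refl fun i hi =>
      hi.trans (T.fH_y i ▸ hpartReach i (y i) (hpath i).right_mem)
  have hreach : ∀ w ∈ H.vertsOf (univ.biUnion P), H.ReachE (univ.biUnion P) (fH (x 0)) w := by
    intro w hw
    obtain ⟨v, hv, rfl⟩ := (mem_vertsOf_map T.H_ends).mp hw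
    obtain ⟨e, he, hve⟩ := mem_vertsOf.mp hv
    obtain ⟨i, -, hei⟩ := mem_biUnion.mp he
    exact (hx₀ i).trans (hpartReach i v (mem_vertsOf_of_mem hei hve))
  exact fun u hu w hw => (hreach u hu).symm.trans (hreach w hw)

omit [Fintype VH] in
lemma deg_H_biUnion {v : V} (hv : v ∈ G0.vertsOf (univ.biUnion P)) :
    H.deg (univ.biUnion P) (fH v) = 2 := by
  have hx : ∀ t, G0.deg (univ.biUnion P) (x t) = 1 := fun t => by
    rw [T.deg_biUnion hpart, T.tau_x]
    exact (hpath t).deg_left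
  have hy : ∀ t, G0.deg (univ.biUnion P) (y t) = 1 := fun t => by
    rw [T.deg_biUnion hpart, T.tau_y]
    exact (hpath t).deg_right
  by_cases hxv : ∃ t, v = x t
  · obtain ⟨t, rfl⟩ := hxv
    rw [T.deg_H_x, hx, hy]
  by_cases hyv : ∃ t, v = y t
  · obtain ⟨t, rfl⟩ := hyv
    rw [T.fH_y, T.deg_H_x, hx, add_sub_cancel_right, hy]
  by_cases hzv : ∃ t, v = z t
  · obtain ⟨t, rfl⟩ := hzv
    exact absurd hv (T.z_notMem_vertsOf_biUnion hpart t)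
  push Not at hxv hyv hzv
  rw [T.deg_H_of_ne fun i => ⟨hxv i, hyv i, hzv i⟩, T.deg_biUnion hpart]
  exact (hpath _).deg_eq_two ((T.mem_vertsOf_biUnion_iff hpart).mp hv) (hxv _) (hyv _)

lemma isCycle_biUnion : H.IsCycle (univ.biUnion P) := by
  refine ⟨?_, T.connectedOn_biUnion hpath, fun w hw => ?_⟩
  · obtain ⟨e, he, -⟩ := mem_vertsOf.mp (hpath 0).left_mem
    exact ⟨e, mem_biUnion.mpr ⟨0, mem_univ _, he⟩⟩
  · obtain ⟨v, hv, rfl⟩ := (mem_vertsOf_map T.H_ends).mp hw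
    exact T.deg_H_biUnion hpart hpath hv

end Union

variable [Fintype VH] [DecidableEq VH] [Fintype VΓ] [DecidableEq VΓ]

theorem exists_isCycle_not_connectedOn (hk : Even k) (h : ∀ i, Relation.ReflTransGen
      (fun a b => a ≠ z i ∧ b ≠ z i ∧ ∃ e, part e = i ∧ a ∈ G0.ends e ∧ b ∈ G0.ends e)
      (x i) (y i)) :
    ∃ C : Finset E, H.IsCycle C ∧ ¬Γ.ConnectedOn C := by
  choose P hP using fun i => T.exists_isPath i (h i)
  have hpart := fun i => (hP i).1
  have hpath := fun i => (hP i).2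
  exact ⟨_, T.isCycle_biUnion hpart hpath, T.not_connectedOn_biUnion hpart hpath hk⟩

end Converse

end ConsecutiveTwisting

variable {V E : Type} [Fintype V] [DecidableEq V] [Fintype E] [DecidableEq E]

theorem consecutive_twisting_connected_iff
    {VH VΓ : Type} [Fintype VH] [DecidableEq VH] [Fintype VΓ] [DecidableEq VΓ]
    (G0 : Multigraph V E) (k : ℕ) (hk : 3 ≤ k)
    (part : E → Fin k) (τ : V → Fin k)
    (hτ : ∀ e, ∀ u : V, u ∈ G0.ends e → τ u = part e)
    (x y z : Fin k → V)
    (hτx : ∀ i, τ (x i) = i) (hτy : ∀ i, τ (y i) = i) (hτz : ∀ i, τ (z i) = i)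
    (hxy : ∀ i, x i ≠ y i) (hxz : ∀ i, x i ≠ z i) (hyz : ∀ i, y i ≠ z i)
    (H : Multigraph VH E) (fH : V → VH)
    (hfH : ∀ u u', fH u = fH u' ↔ (u = u' ∨ (∃ i j, u = z i ∧ u' = z j) ∨
      ∃ i : Fin k, (u = y (i - ⟨1, by omega⟩) ∧ u' = x i) ∨
        (u = x i ∧ u' = y (i - ⟨1, by omega⟩))))
    (hHends : ∀ e, H.ends e = Sym2.map fH (G0.ends e))
    (Γ : Multigraph VΓ E) (fΓ : V → VΓ)
    (hfΓ : ∀ u u', fΓ u = fΓ u' ↔ (u = u' ∨ ∃ i : Fin k,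
      u ∈ ({y (i - ⟨1, by omega⟩), z i, x (i + ⟨1, by omega⟩)} : Set V) ∧
      u' ∈ ({y (i - ⟨1, by omega⟩), z i, x (i + ⟨1, by omega⟩)} : Set V)))
    (hΓends : ∀ e, Γ.ends e = Sym2.map fΓ (G0.ends e))
 :
    (∀ C : Finset E, H.IsCycle C → Γ.ConnectedOn C) ↔
      (Even k → ∃ i : Fin k, ¬ Relation.ReflTransGen
        (fun a b => a ≠ z i ∧ b ≠ z i ∧ ∃ e, part e = i ∧ a ∈ G0.ends e ∧ b ∈ G0.ends e)
        (x i) (y i)) := by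
  have : NeZero k := ⟨by omega⟩
  have hone : (⟨1, by omega⟩ : Fin k) = 1 :=
    Fin.ext (by rw [Fin.val_one', Nat.mod_eq_of_lt (by omega)])
  simp only [hone] at hfH hfΓ
  have T : ConsecutiveTwisting G0 part τ x y z H fH Γ fΓ :=
    ⟨hτ, hτx, hτy, hτz, hxy, hxz, hyz, hfH, hHends, hfΓ, hΓends⟩
  constructor
  · intro hconn heven
    by_contra! hreach
    obtain ⟨C, hC, hnot⟩ := T.exists_isCycle_not_connectedOn heven hreach
    exact hnot (hconn C hC)
  · intro hside C hC
    refine (T.connectedOn_or_reflTransGen hC).resolve_right fun ⟨heven, hreach⟩ => ?_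
    obtain ⟨i, hi⟩ := hside heven
    exact hi (hreach i)
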